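/- Let e₁, e₂, e₂', e₃' be integers with e₂ > e₁ ≥ 0 and e₂' ≥ e₃' ≥ 0. Define σ, σ' : SL(2,k) → SL(4,k) by σ(A) = A^{(p^{e₂})} ⊗ A^{(p^{e₁})} (Kronecker product) and σ'(A) = diag(A^{(p^{e₂'})}, A^{(p^{e₃'})}) (block-diagonal). Then σ and σ' are not equivalent: there exists no P ∈ GL(4,k) such that P⁻¹·σ(A)·P = σ'(A) for all A ∈ SL(2,k). -/

import Mathlib

open Matrix

/-- Entrywise `m`-th power of a 2×2 matrix: `A^{(m)} = [[a^m, b^m],[c^m, d^m]]`. -/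
noncomputable def entryPow {k : Type*} [Field k] (A : Matrix (Fin 2) (Fin 2) k) (m : ℕ) :
    Matrix (Fin 2) (Fin 2) k :=
  Matrix.of fun i j => A i j ^ m

/-- The Kronecker product of two 2×2 matrices as a 4×4 matrix in 2×2 blocks. -/
noncomputable def kron4 {k : Type*} [Field k] (X Y : Matrix (Fin 2) (Fin 2) k) :
    Matrix (Fin 4) (Fin 4) k :=
  !![X 0 0 * Y 0 0, X 0 0 * Y 0 1, X 0 1 * Y 0 0, X 0 1 * Y 0 1;
     X 0 0 * Y 1 0, X 0 0 * Y 1 1, X 0 1 * Y 1 0, X 0 1 * Y 1 1;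
     X 1 0 * Y 0 0, X 1 0 * Y 0 1, X 1 1 * Y 0 0, X 1 1 * Y 0 1;
     X 1 0 * Y 1 0, X 1 0 * Y 1 1, X 1 1 * Y 1 0, X 1 1 * Y 1 1]

/-- The block-diagonal 4×4 matrix `diag(X, Y)` built from two 2×2 matrices. -/
noncomputable def blockDiag4 {k : Type*} [Field k] (X Y : Matrix (Fin 2) (Fin 2) k) :
    Matrix (Fin 4) (Fin 4) k :=
  !![X 0 0, X 0 1, 0, 0;
     X 1 0, X 1 1, 0, 0;
     0, 0, Y 0 0, Y 0 1;
     0, 0, Y 1 0, Y 1 1]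

/-!
Equivalent representations have equal traces. For `A = [[1, 1], [-1, 0]] ∈ SL(2, k)` and any
`q = p^e ≥ 1`, the matrix `A^{(q)}` has trace `1^q + 0^q = 1`, so `σ(A)` has trace `1 · 1 = 1`
while `σ'(A)` has trace `1 + 1 = 2`.
-/

section

variable {k : Type*} [Field k]

theorem trace_kron4 (X Y : Matrix (Fin 2) (Fin 2) k) :
    (kron4 X Y).trace = X.trace * Y.trace := by
  simp only [trace, kron4, diag_apply, of_apply, cons_val', cons_val_fin_one, Fin.sum_univ_four,
    cons_val_zero, cons_val_one, cons_val, Fin.sum_univ_two]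
  ring

theorem trace_blockDiag4 (X Y : Matrix (Fin 2) (Fin 2) k) :
    (blockDiag4 X Y).trace = X.trace + Y.trace := by
  simp only [trace, blockDiag4, diag_apply, of_apply, cons_val', cons_val_fin_one,
    Fin.sum_univ_four, cons_val_zero, cons_val_one, cons_val, Fin.sum_univ_two]
  ring

theorem trace_entryPow (A : Matrix (Fin 2) (Fin 2) k) (m : ℕ) :
    (entryPow A m).trace = A 0 0 ^ m + A 1 1 ^ m := by
  simp only [entryPow, trace_fin_two, of_apply]

theorem trace_entryPow_of_eq_one_of_eq_zero {A : Matrix (Fin 2) (Fin 2) k} (h₀₀ : A 0 0 = 1)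
    (h₁₁ : A 1 1 = 0) {m : ℕ} (hm : m ≠ 0) : (entryPow A m).trace = 1 := by
  rw [trace_entryPow, h₀₀, h₁₁, one_pow, zero_pow hm, add_zero]

end

theorem stmt16_general {k : Type*} [Field k] {p : ℕ} [Fact p.Prime]
    (e₁ e₂ e₂' e₃' : ℕ) :
    ¬∃ P : GL (Fin 4) k, ∀ A : SpecialLinearGroup (Fin 2) k,
      ((P⁻¹ : GL (Fin 4) k) : Matrix (Fin 4) (Fin 4) k) *
          kron4 (entryPow A.1 (p ^ e₂)) (entryPow A.1 (p ^ e₁)) *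
          (P : Matrix (Fin 4) (Fin 4) k) =
        blockDiag4 (entryPow A.1 (p ^ e₂')) (entryPow A.1 (p ^ e₃')) := by
  rintro ⟨P, hP⟩
  let A : SpecialLinearGroup (Fin 2) k := ⟨!![1, 1; -1, 0], by simp [det_fin_two_of]⟩
  have hq : ∀ e, p ^ e ≠ 0 := fun e => pow_ne_zero e (Fact.out : p.Prime).ne_zero
  have htrace := congrArg trace (hP A)
  simp only [trace_units_conj', trace_kron4, trace_blockDiag4,
    trace_entryPow_of_eq_one_of_eq_zero (A := A.1) rfl rfl (hq _), one_mul] at htrace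
  exact one_ne_zero (left_eq_add.mp htrace)

/-- The Kronecker-product homomorphism
`σ(A) = A^{(p^{e₂})} ⊗ A^{(p^{e₁})}` (with `e₂ > e₁ ≥ 0`) is never equivalent to a
block-diagonal homomorphism `σ'(A) = diag(A^{(p^{e₂'})}, A^{(p^{e₃'})})`
(with `e₂' ≥ e₃' ≥ 0`). -/
theorem stmt16 {k : Type*} [Field k] [IsAlgClosed k] {p : ℕ} [Fact p.Prime] [CharP k p]
    (e₁ e₂ e₂' e₃' : ℕ) (h : e₁ < e₂) (h' : e₃' ≤ e₂') :
    ¬∃ P : GL (Fin 4) k, ∀ A : SpecialLinearGroup (Fin 2) k,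
      ((P⁻¹ : GL (Fin 4) k) : Matrix (Fin 4) (Fin 4) k) *
          kron4 (entryPow A.1 (p ^ e₂)) (entryPow A.1 (p ^ e₁)) *
          (P : Matrix (Fin 4) (Fin 4) k) =
        blockDiag4 (entryPow A.1 (p ^ e₂')) (entryPow A.1 (p ^ e₃')) :=
  stmt16_general e₁ e₂ e₂' e₃'
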